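/- With D_i the derivation on P_n = F_p[x_1,...,x_n] given by D_i(x_j) = x_j^{p^i}, one has D_i(Q_{n,s}) = (-1)^n [0,1,...,ŝ,...,n-1, i] · L_n^{p-2} for all 0 ≤ s < n and i ≥ 1 (for p = 2 interpret L_n^{p-2} as L_n^{-1}, i.e., the equation L_n·D_i(Q_{n,s}) = [0,...,ŝ,...,n-1,i] holds; for odd p it is a polynomial identity). -/

import Mathlib

/-!
Since `D_i` is a derivation killing `p`-th powers, it acts on a bracket `[e]` row by row and only
the row with `e_k = 0` survives, where `x_j` becomes `x_j^{p^i}`; also `L_n^p = [1,…,n]` by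
Frobenius. Clearing denominators, `L_n^2 D_i(Q_{n,s}) = L_n D_i(L_{n,s}) - D_i(L_n) L_{n,s}`.
For `s = 0` this is `-[i,1,…,n-1] L_n^p`. For `s > 0`, Cramer's rule expands
`L_n [i,1,…,ŝ,…,n]` as a sum over the rows of `L_n`; besides `D_i(L_n) L_{n,s}` only the term
`[0,…,i,…,n-1]·[s,1,…,ŝ,…,n]` (with `i` in row `s`) survives. Rotating rows cyclically turns
both factors into the brackets of the statement, with total sign `(-1)^n`.
-/

open MvPolynomial Matrix Finset

/-- `[e₁,…,eₙ]`: the determinant of the matrix with `(k,j)`-entry `x_j^{p^{e_k}}`. -/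
noncomputable def bracket (p n : ℕ) (e : Fin n → ℕ) : MvPolynomial (Fin n) (ZMod p) :=
  (Matrix.of fun k j : Fin n => (X j : MvPolynomial (Fin n) (ZMod p)) ^ p ^ (e k)).det

/-- `L_n = [0,1,…,n-1]`. -/
noncomputable def Ln (p n : ℕ) : MvPolynomial (Fin n) (ZMod p) :=
  bracket p n (fun k => (k : ℕ))

/-- `L_{n,s} = [0,1,…,ŝ,…,n]` (entry `s` omitted from `0,…,n`). -/
noncomputable def Lns (p n s : ℕ) : MvPolynomial (Fin n) (ZMod p) :=
  bracket p n (fun k => if (k : ℕ) < s then (k : ℕ) else (k : ℕ) + 1)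

/-- The `i`-th primitive Steenrod–Milnor operation, as the `F_p`-derivation
with `D_i(x_j) = x_j^{p^i}`. -/
noncomputable def Dop (p n i : ℕ) :
    Derivation (ZMod p) (MvPolynomial (Fin n) (ZMod p)) (MvPolynomial (Fin n) (ZMod p)) :=
  MvPolynomial.mkDerivation (ZMod p) (fun j : Fin n => (X j) ^ p ^ i)

/-- The action of a matrix `g` on `P_n` by linear substitution of the variables. -/
noncomputable def act (p n : ℕ) (g : Matrix (Fin n) (Fin n) (ZMod p)) :
    MvPolynomial (Fin n) (ZMod p) →ₐ[ZMod p] MvPolynomial (Fin n) (ZMod p) :=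
  MvPolynomial.aeval (fun j : Fin n => ∑ k : Fin n, g j k • (X k : MvPolynomial (Fin n) (ZMod p)))


theorem Derivation.leibniz_prod {R A ι : Type*} [CommSemiring R] [CommSemiring A] [Algebra R A]
    [DecidableEq ι] (D : Derivation R A A) (s : Finset ι) (f : ι → A) :
    D (∏ i ∈ s, f i) = ∑ i ∈ s, ∏ j ∈ s, Function.update f i (D (f i)) j := by
  induction s using Finset.induction_on with
  | empty => simp
  | insert a s ha ih =>
    rw [prod_insert ha, leibniz, ih, sum_insert ha, prod_insert ha, Function.update_self,
      prod_update_of_notMem ha, smul_eq_mul, smul_eq_mul, mul_sum, add_comm, mul_comm]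
    congr 1
    refine sum_congr rfl fun i hi => ?_
    rw [prod_insert ha, Function.update_of_ne fun h : a = i => ha (h ▸ hi)]

theorem Derivation.map_det {R A m : Type*} [CommSemiring R] [CommRing A] [Algebra R A]
    [Fintype m] [DecidableEq m] (D : Derivation R A A) (M : Matrix m m A) :
    D M.det = ∑ t, (M.updateRow t fun j => D (M t j)).det := by
  simp only [det_apply, map_sum, Units.smul_def, map_zsmul, D.leibniz_prod]
  conv_rhs => rw [sum_comm]
  refine sum_congr rfl fun σ _ => ?_
  rw [smul_sum, ← Equiv.sum_comp σ (fun t => _ • ∏ i, (M.updateRow t _) (σ i) i)]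
  refine sum_congr rfl fun k _ => ?_
  congr 1
  refine prod_congr rfl fun i _ => ?_
  rcases eq_or_ne i k with rfl | hik
  · simp
  · rw [Function.update_of_ne hik, updateRow_ne (σ.injective.ne hik)]

theorem Matrix.det_mul_det_updateRow {R m : Type*} [CommRing R] [Fintype m] [DecidableEq m]
    (A C : Matrix m m R) (b : m → R) (t : m) :
    A.det * (C.updateRow t b).det
      = ∑ k, (A.updateRow k b).det * (C.updateRow t (A k)).det := by
  let L : (m → R) →ₗ[R] R := (detRowAlternating (R := R) (n := m)).toLinearMap C t
  have hL : ∀ x, L x = (C.updateRow t x).det := fun _ => rfl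
  have hcramer := congrArg L (mulVec_cramer Aᵀ b)
  rw [mulVec_transpose, vecMul_eq_sum, det_transpose] at hcramer
  simp only [map_sum, map_smul, smul_eq_mul, cramer_transpose_apply] at hcramer
  simpa only [hL] using hcramer.symm

lemma Fin.val_cycleIcc {n : ℕ} (a b k : Fin n) :
    (Fin.cycleIcc a b k : ℕ)
      = if (k : ℕ) < a ∨ (b : ℕ) < k then (k : ℕ)
        else if k = b then (a : ℕ) else (k : ℕ) + 1 := by
  have := a.neZero
  rcases lt_or_ge k a with hka | hak
  · rw [Fin.cycleIcc_of_lt hka, if_pos (Or.inl (Fin.lt_def.1 hka))]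
  rcases lt_or_ge b k with hbk | hkb
  · rw [Fin.cycleIcc_of_gt hbk, if_pos (Or.inr (Fin.lt_def.1 hbk))]
  have hak' : (a : ℕ) ≤ k := hak
  have hkb' : (k : ℕ) ≤ b := hkb
  rw [Fin.cycleIcc_of_le_of_le hak hkb, if_neg (by omega : ¬((k : ℕ) < a ∨ (b : ℕ) < k))]
  split_ifs with hk
  · rfl
  · exact Fin.val_add_one_of_lt' (by have := Fin.val_ne_of_ne hk; omega)

section Bracket

variable (p n : ℕ)

noncomputable def bracketMatrix (e : Fin n → ℕ) :
    Matrix (Fin n) (Fin n) (MvPolynomial (Fin n) (ZMod p)) :=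
  Matrix.of fun k j => (X j : MvPolynomial (Fin n) (ZMod p)) ^ p ^ e k

lemma bracket_eq_det (e : Fin n → ℕ) : bracket p n e = (bracketMatrix p n e).det := rfl

lemma bracketMatrix_row (e : Fin n → ℕ) (k : Fin n) :
    bracketMatrix p n e k = fun j => (X j : MvPolynomial (Fin n) (ZMod p)) ^ p ^ e k := rfl

lemma updateRow_bracketMatrix (e : Fin n → ℕ) (t : Fin n) (m : ℕ) :
    (bracketMatrix p n e).updateRow t (fun j => X j ^ p ^ m)
      = bracketMatrix p n (Function.update e t m) := by
  ext k j
  rcases eq_or_ne k t with rfl | hk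
  · simp [bracketMatrix]
  · simp [bracketMatrix, hk]

lemma bracket_comp_perm (e : Fin n → ℕ) (σ : Equiv.Perm (Fin n)) :
    bracket p n (e ∘ σ) = Equiv.Perm.sign σ * bracket p n e :=
  det_permute σ (bracketMatrix p n e)

lemma bracket_comp_cycleIcc (e : Fin n → ℕ) {a b : Fin n} (hab : a ≤ b) :
    bracket p n (e ∘ Fin.cycleIcc a b) = (-1) ^ (b - a : ℕ) * bracket p n e := by
  rw [bracket_comp_perm, Fin.sign_cycleIcc_of_le hab]
  push_cast
  rfl

lemma bracket_update_eq_zero (e : Fin n → ℕ) {t u : Fin n} (h : t ≠ u) :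
    bracket p n (Function.update e t (e u)) = 0 :=
  det_zero_of_row_eq h (by ext j; simp [Function.update_of_ne h.symm])

lemma bracket_pow_char [Fact p.Prime] (e : Fin n → ℕ) :
    bracket p n e ^ p = bracket p n (fun k => e k + 1) := by
  rw [bracket_eq_det, ← frobenius_def, RingHom.map_det]
  congr 1
  ext k j
  simp [bracketMatrix, frobenius_def, ← pow_mul, pow_succ]

lemma bracket_mul_bracket_update (e f : Fin n → ℕ) (t : Fin n) (m : ℕ) :
    bracket p n e * bracket p n (Function.update f t m)
      = ∑ k, bracket p n (Function.update e k m) * bracket p n (Function.update f t (e k)) := by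
  simpa only [bracket_eq_det, ← updateRow_bracketMatrix, bracketMatrix_row] using
    det_mul_det_updateRow (bracketMatrix p n e) (bracketMatrix p n f) (fun j => X j ^ p ^ m) t

lemma Dop_X_pow_pow (i e : ℕ) (j : Fin n) :
    Dop p n i (X j ^ p ^ e) = if e = 0 then X j ^ p ^ i else 0 := by
  rcases e with _ | e
  · simp [Dop, mkDerivation_X]
  · rw [Derivation.leibniz_pow, nsmul_eq_mul]
    simp [Nat.cast_pow, CharP.cast_eq_zero]

lemma Dop_bracket (i : ℕ) (e : Fin n → ℕ) :
    Dop p n i (bracket p n e)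
      = ∑ t, if e t = 0 then bracket p n (Function.update e t i) else 0 := by
  rw [bracket_eq_det, Derivation.map_det]
  refine sum_congr rfl fun t _ => ?_
  simp only [bracketMatrix_row, Dop_X_pow_pow]
  split_ifs
  · rw [updateRow_bracketMatrix, bracket_eq_det]
  · exact det_eq_zero_of_row_eq_zero t fun j => by simp

lemma Ln_ne_zero [Fact p.Prime] : Ln p n ≠ 0 := by
  let d : Fin n →₀ ℕ := Finsupp.indicator univ fun j _ => p ^ (j : ℕ)
  -- the monomial `∏ x_j^{p^j}` occurs only in the diagonal term of the determinant
  have hdiag : ∀ σ : Equiv.Perm (Fin n),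
      d = Finsupp.indicator univ (fun j _ => p ^ (σ j : ℕ)) ↔ σ = 1 := by
    refine fun σ => ⟨fun h => Equiv.ext fun j => Fin.ext ?_, fun h => h ▸ rfl⟩
    have := DFunLike.congr_fun h j
    simp only [d, Finsupp.indicator_apply, mem_univ] at this
    exact (Nat.pow_right_injective (Fact.out : p.Prime).two_le this).symm
  have hcoeff : coeff d (Ln p n) = 1 := by
    rw [Ln, bracket, det_apply, coeff_sum]
    simp only [Units.smul_def, coeff_smul, of_apply, coeff_prod_X_pow, hdiag]
    simp
  intro h
  simp [h] at hcoeff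

lemma Dop_bracket_of_ne_zero (i : ℕ) {e : Fin n → ℕ} (he : ∀ k, e k ≠ 0) :
    Dop p n i (bracket p n e) = 0 := by
  simp [Dop_bracket, he]

lemma Dop_bracket_of_eq_zero (i : ℕ) {e : Fin n → ℕ} {t : Fin n} (ht : e t = 0)
    (he : ∀ k, k ≠ t → e k ≠ 0) :
    Dop p n i (bracket p n e) = bracket p n (Function.update e t i) := by
  rw [Dop_bracket, sum_eq_single t (fun k _ hk => if_neg (he k hk)) (by simp), if_pos ht]

def lnsExp (s : ℕ) : Fin n → ℕ := fun k => if (k : ℕ) < s then k else k + 1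

lemma Lns_eq_bracket (s : ℕ) : Lns p n s = bracket p n (lnsExp n s) := rfl

lemma Ln_pow_char [Fact p.Prime] : Ln p n ^ p = bracket p n (fun k => k + 1) :=
  bracket_pow_char p n _

lemma Lns_zero [Fact p.Prime] : Lns p n 0 = Ln p n ^ p := by
  simp [Lns, Ln_pow_char]

lemma Dop_Ln [NeZero n] (i : ℕ) :
    Dop p n i (Ln p n) = bracket p n (Function.update Fin.val 0 i) :=
  Dop_bracket_of_eq_zero p n i rfl fun k hk => by rwa [Ne, Fin.ext_iff, Fin.val_zero] at hk

lemma Dop_Lns_zero (i : ℕ) : Dop p n i (Lns p n 0) = 0 :=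
  Dop_bracket_of_ne_zero p n i fun k => by simp

lemma Dop_Lns [NeZero n] {s : ℕ} (hs : 0 < s) (i : ℕ) :
    Dop p n i (Lns p n s) = bracket p n (Function.update (lnsExp n s) 0 i) := by
  rw [Lns_eq_bracket]
  refine Dop_bracket_of_eq_zero p n i (by simp [lnsExp, hs]) fun k hk => ?_
  have hk : (k : ℕ) ≠ 0 := by rwa [Ne, Fin.ext_iff, Fin.val_zero] at hk
  dsimp only [lnsExp]
  split_ifs <;> omega

lemma bracket_lnsExp_last_eq_neg_one_pow_mul {s : ℕ} (hs : s < n) (i : ℕ) :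
    bracket p n (fun k => if (k : ℕ) = n - 1 then i else lnsExp n s k)
      = (-1) ^ (n - 1 - s) * bracket p n (Function.update Fin.val ⟨s, hs⟩ i) := by
  have hperm : (fun k : Fin n => if (k : ℕ) = n - 1 then i else lnsExp n s k)
      = Function.update Fin.val ⟨s, hs⟩ i ∘ Fin.cycleIcc ⟨s, hs⟩ ⟨n - 1, by omega⟩ := by
    funext k
    have := k.isLt
    simp only [Function.comp_apply, Function.update_apply, Fin.ext_iff, Fin.val_cycleIcc, lnsExp]
    split_ifs <;> omega
  rw [hperm, bracket_comp_cycleIcc p n _ (Fin.mk_le_mk.2 (by omega))]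

lemma Ln_pow_char_eq_neg_one_pow_mul [Fact p.Prime] [NeZero n] {s : ℕ} (hs0 : 0 < s)
    (hs : s < n) :
    Ln p n ^ p = (-1) ^ (s - 1) * bracket p n (Function.update (lnsExp n s) 0 s) := by
  have hperm : (fun k : Fin n => (k : ℕ) + 1)
      = Function.update (lnsExp n s) 0 s ∘ Fin.cycleIcc 0 ⟨s - 1, by omega⟩ := by
    funext k
    have := k.isLt
    simp only [Function.comp_apply, Function.update_apply, Fin.ext_iff, Fin.val_cycleIcc,
      Fin.val_zero, lnsExp]
    split_ifs <;> first | omega | contradiction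
  rw [Ln_pow_char, hperm, bracket_comp_cycleIcc p n _ (Fin.zero_le _)]
  rfl

lemma Ln_mul_bracket_update_lnsExp [NeZero n] {s : ℕ} (hs0 : 0 < s) (hs : s < n) (i : ℕ) :
    Ln p n * bracket p n (Function.update (lnsExp n s) 0 i)
      = bracket p n (Function.update Fin.val 0 i) * Lns p n s
        + bracket p n (Function.update Fin.val ⟨s, hs⟩ i)
          * bracket p n (Function.update (lnsExp n s) 0 s) := by
  have hne : (0 : Fin n) ≠ ⟨s, hs⟩ := by simp [Fin.ext_iff]; omega
  rw [Ln, bracket_mul_bracket_update, ← sum_subset (subset_univ {0, ⟨s, hs⟩}), sum_pair hne]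
  · rw [show ((0 : Fin n) : ℕ) = lnsExp n s 0 by simp [lnsExp, hs0], Function.update_eq_self]
    rfl
  · intro k _ hk
    simp only [mem_insert, mem_singleton, Fin.ext_iff, Fin.val_zero] at hk
    -- the exponent `k` already occurs in `lnsExp n s`, in a row other than `0`
    obtain ⟨u, hu0, hu⟩ : ∃ u : Fin n, u ≠ 0 ∧ lnsExp n s u = k := by
      refine ⟨⟨if (k : ℕ) < s then k else k - 1, by split_ifs <;> omega⟩, ?_, ?_⟩
      · simp only [Ne, Fin.ext_iff, Fin.val_zero]
        split_ifs <;> omega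
      · simp only [lnsExp]
        split_ifs <;> omega
    rw [← hu, bracket_update_eq_zero p n _ hu0.symm, mul_zero]

lemma Ln_mul_Dop_Lns_sub_Dop_Ln_mul_Lns [Fact p.Prime] {s : ℕ} (hs : s < n) (i : ℕ) :
    Ln p n * Dop p n i (Lns p n s) - Dop p n i (Ln p n) * Lns p n s
      = (-1) ^ n * bracket p n (fun k => if (k : ℕ) = n - 1 then i else lnsExp n s k)
          * Ln p n ^ p := by
  have : NeZero n := ⟨by omega⟩
  rw [bracket_lnsExp_last_eq_neg_one_pow_mul p n hs, Dop_Ln]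
  rcases Nat.eq_zero_or_pos s with rfl | hs0
  · have hsign : (-1 : MvPolynomial (Fin n) (ZMod p)) ^ n * (-1) ^ (n - 1) = -1 := by
      rw [← pow_add]
      exact Odd.neg_one_pow ⟨n - 1, by omega⟩
    rw [Dop_Lns_zero, Lns_zero, show (⟨0, hs⟩ : Fin n) = 0 by ext; simp]
    linear_combination (-(bracket p n (Function.update Fin.val 0 i) * Ln p n ^ p)) * hsign
  · have hsign : (-1 : MvPolynomial (Fin n) (ZMod p)) ^ n * (-1) ^ (n - 1 - s) * (-1) ^ (s - 1)
        = 1 := by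
      rw [← pow_add, ← pow_add]
      exact Even.neg_one_pow ⟨n - 1, by omega⟩
    rw [Dop_Lns p n hs0, Ln_mul_bracket_update_lnsExp p n hs0 hs,
      Ln_pow_char_eq_neg_one_pow_mul p n hs0 hs]
    linear_combination (-(bracket p n (Function.update Fin.val ⟨s, hs⟩ i)
      * bracket p n (Function.update (lnsExp n s) 0 s))) * hsign

end Bracket

theorem stmt6_general (p n : ℕ) [Fact p.Prime]
    (Q : ℕ → MvPolynomial (Fin n) (ZMod p))
    (hQ : ∀ s < n, Lns p n s = Ln p n * Q s)
    (s i : ℕ) (hs : s < n) :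
    Ln p n * Dop p n i (Q s) =
      (-1 : MvPolynomial (Fin n) (ZMod p)) ^ n *
        bracket p n (fun k =>
          if (k : ℕ) = n - 1 then i else if (k : ℕ) < s then (k : ℕ) else (k : ℕ) + 1) *
        (Ln p n) ^ (p - 1) := by
  refine mul_left_cancel₀ (Ln_ne_zero p n) ?_
  have key := Ln_mul_Dop_Lns_sub_Dop_Ln_mul_Lns p n hs i
  rw [hQ s hs, Derivation.leibniz, smul_eq_mul, smul_eq_mul] at key
  calc Ln p n * (Ln p n * Dop p n i (Q s))
      = Ln p n * (Ln p n * Dop p n i (Q s) + Q s * Dop p n i (Ln p n))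
          - Dop p n i (Ln p n) * (Ln p n * Q s) := by ring
    _ = (-1) ^ n * bracket p n (fun k => if (k : ℕ) = n - 1 then i else lnsExp n s k)
          * Ln p n ^ p := key
    _ = Ln p n * ((-1) ^ n * bracket p n (fun k => if (k : ℕ) = n - 1 then i else lnsExp n s k)
          * Ln p n ^ (p - 1)) := by
      rw [← mul_pow_sub_one (Fact.out : p.Prime).ne_zero]
      ring

theorem stmt6 (p n : ℕ) [Fact p.Prime] (hn : 1 ≤ n)
    (Q : ℕ → MvPolynomial (Fin n) (ZMod p))
    (hQ : ∀ s < n, Lns p n s = Ln p n * Q s)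
    (s i : ℕ) (hs : s < n) (hi : 1 ≤ i) :
    Ln p n * Dop p n i (Q s) =
      (-1 : MvPolynomial (Fin n) (ZMod p)) ^ n *
        bracket p n (fun k =>
          if (k : ℕ) = n - 1 then i else if (k : ℕ) < s then (k : ℕ) else (k : ℕ) + 1) *
        (Ln p n) ^ (p - 1) :=
  stmt6_general p n Q hQ s i hs
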